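/- Let n, m ≥ 1, let Ω ⊆ [n]×[m] be an observation pattern, and let (i,j) ∈ [n]×[m] be such that u_i and v_j lie in different connected components of the bipartite graph G(Ω). Then there exist additive matrices M*, M'* ∈ ℝ^{n×m} such that M*_{kℓ} = M'*_{kℓ} for every (k,ℓ) ∈ Ω but M*_{ij} ≠ M'*_{ij}. -/

import Mathlib

/-- The bipartite observation graph `G(Ω)`: row vertices `Sum.inl k` and column
vertices `Sum.inr ℓ`, with an edge iff `(k,ℓ) ∈ Ω`. -/
def bipGraph {n m : ℕ} (Ω : Finset (Fin n × Fin m)) : SimpleGraph (Fin n ⊕ Fin m) where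
  Adj x y :=
    match x, y with
    | Sum.inl k, Sum.inr l => (k, l) ∈ Ω
    | Sum.inr l, Sum.inl k => (k, l) ∈ Ω
    | _, _ => False
  symm := by
    constructor
    rintro (k | k) (l | l) h
    · exact h.elim
    · exact h
    · exact h
    · exact h.elim
  loopless := by constructor; rintro (k | k) h <;> exact h

/-! The difference of the two additive matrices is `±1` on the component of `u_i` and `0`
elsewhere, with the sign `+` on rows and `-` on columns, so it vanishes on every edge but
not at `(i, j)`. -/

namespace SimpleGraph

theorem exists_add_eq_zero_of_adj_of_not_reachable {α β : Type*} (G : SimpleGraph (α ⊕ β))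
    {i : α} {j : β} (hij : ¬ G.Reachable (.inl i) (.inr j)) :
    ∃ (a : α → ℝ) (b : β → ℝ),
      (∀ k l, G.Adj (.inl k) (.inr l) → a k + b l = 0) ∧ a i + b j ≠ 0 := by
  classical
  refine ⟨fun k => if G.Reachable (.inl i) (.inl k) then 1 else 0,
    fun l => if G.Reachable (.inl i) (.inr l) then -1 else 0, fun k l hkl => ?_, by simp [hij]⟩
  have hsame : G.Reachable (.inl i) (.inl k) ↔ G.Reachable (.inl i) (.inr l) :=
    ⟨fun h => h.trans hkl.reachable, fun h => h.trans hkl.reachable.symm⟩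
  by_cases h : G.Reachable (.inl i) (.inl k)
  · simp [h, hsame.mp h]
  · simp [h, mt hsame.mpr h]

end SimpleGraph

theorem stmt0_general {n m : ℕ} (Ω : Finset (Fin n × Fin m))
    (i : Fin n) (j : Fin m)
    (hdisc : ¬ (bipGraph Ω).Reachable (Sum.inl i) (Sum.inr j)) :
    ∃ (a : Fin n → ℝ) (b : Fin m → ℝ) (a' : Fin n → ℝ) (b' : Fin m → ℝ),
      (∀ p ∈ Ω, a p.1 + b p.2 = a' p.1 + b' p.2) ∧ a i + b j ≠ a' i + b' j := by
  obtain ⟨a, b, hedge, hij⟩ := (bipGraph Ω).exists_add_eq_zero_of_adj_of_not_reachable hdisc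
  refine ⟨0, 0, a, b, fun p hp => ?_, fun h => hij ?_⟩
  · simpa using (hedge p.1 p.2 hp).symm
  · simpa using h.symm

theorem stmt0 {n m : ℕ} (hn : 1 ≤ n) (hm : 1 ≤ m) (Ω : Finset (Fin n × Fin m))
    (i : Fin n) (j : Fin m)
    (hdisc : ¬ (bipGraph Ω).Reachable (Sum.inl i) (Sum.inr j)) :
    ∃ (a : Fin n → ℝ) (b : Fin m → ℝ) (a' : Fin n → ℝ) (b' : Fin m → ℝ),
      (∀ p ∈ Ω, a p.1 + b p.2 = a' p.1 + b' p.2) ∧ a i + b j ≠ a' i + b' j :=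
  stmt0_general Ω i j hdisc
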